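/- arXiv:1612.05330 — 3 statements merged into one kernel-verified Lean document; each statement's English description precedes it below -/
import Mathlib

section
/- Let A be a positive integer and h(x) = 1 - (1-x)^{1/A}. If x, y ∈ [0.29, 0.55], then |log h(x) - log h(y)| ≤ 11·|x - y|. -/
theorem stmt_9 (A : ℕ) (hA : 0 < A) (x y : ℝ)
    (hx : x ∈ Set.Icc (0.29 : ℝ) 0.55) (hy : y ∈ Set.Icc (0.29 : ℝ) 0.55) :
    |Real.log (1 - (1 - x) ^ (1 / (A : ℝ))) - Real.log (1 - (1 - y) ^ (1 / (A : ℝ)))|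
      ≤ 11 * |x - y| := by
  set c : ℝ := 1 / (A : ℝ) with hc
  have hA1 : (1 : ℝ) ≤ (A : ℝ) := by exact_mod_cast hA
  have hc0 : 0 < c := by positivity
  have hc1 : c ≤ 1 := by
    rw [hc, div_le_one (by linarith)]; exact hA1
  set s : Set ℝ := Set.Icc (0.29 : ℝ) 0.55 with hs
  set f : ℝ → ℝ := fun w => Real.log (1 - (1 - w) ^ c) with hf
  set f' : ℝ → ℝ := fun w => c * (1 - w) ^ (c - 1) / (1 - (1 - w) ^ c) with hf'
  have key : ∀ z ∈ s, HasDerivWithinAt f (f' z) s z := by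
    intro z hz
    obtain ⟨hz1, hz2⟩ := hz
    have ht0 : (0 : ℝ) < 1 - z := by norm_num at hz2 ⊢; linarith
    have ht1 : (1 - z) < 1 := by norm_num at hz1 ⊢; linarith
    have hden : (0 : ℝ) < 1 - (1 - z) ^ c :=
      sub_pos.mpr (Real.rpow_lt_one ht0.le ht1 hc0)
    have h1 : HasDerivAt (fun w : ℝ => 1 - w) (-1) z := by
      simpa using (hasDerivAt_id z).const_sub 1
    have h2 : HasDerivAt (fun w : ℝ => (1 - w) ^ c)
        (c * (1 - z) ^ (c - 1) * (-1)) z :=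
      (Real.hasDerivAt_rpow_const (Or.inl ht0.ne')).comp z h1
    have h3 : HasDerivAt (fun w : ℝ => 1 - (1 - w) ^ c)
        (c * (1 - z) ^ (c - 1)) z := by
      simpa using h2.const_sub 1
    exact (h3.log hden.ne').hasDerivWithinAt
  have bound : ∀ z ∈ s, ‖f' z‖ ≤ 11 := by
    intro z hz
    obtain ⟨hz1, hz2⟩ := hz
    norm_num at hz1 hz2
    have ht0 : (0 : ℝ) < 1 - z := by linarith
    have ht1 : (1 - z) < 1 := by linarith
    have hden : (0 : ℝ) < 1 - (1 - z) ^ c :=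
      sub_pos.mpr (Real.rpow_lt_one ht0.le ht1 hc0)
    -- Bernoulli: (1-z)^c ≤ 1 + c * (-z)
    have hbern : (1 - z) ^ c ≤ 1 + c * (-z) := by
      have := rpow_one_add_le_one_add_mul_self (s := -z) (by linarith) hc0.le hc1
      rw [← sub_eq_add_neg] at this
      simpa using this
    have hdenlb : c * z ≤ 1 - (1 - z) ^ c := by nlinarith
    have hnum : c * (1 - z) ^ (c - 1) = c * (1 - z) ^ c / (1 - z) := by
      rw [Real.rpow_sub ht0, Real.rpow_one]; ring
    have hnumle : c * (1 - z) ^ (c - 1) ≤ c / (1 - z) := by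
      rw [hnum]
      gcongr
      exact mul_le_of_le_one_right hc0.le (Real.rpow_le_one ht0.le ht1.le hc0.le)
    have hnumpos : 0 ≤ c * (1 - z) ^ (c - 1) := by positivity
    rw [hf', Real.norm_eq_abs, abs_of_nonneg (by positivity)]
    have h11 : c * (1 - z) ^ (c - 1) ≤ 11 * (1 - (1 - z) ^ c) := by
      have hcz : c / (1 - z) ≤ 11 * (c * z) := by
        rw [div_le_iff₀ ht0]
        nlinarith [mul_nonneg hc0.le (mul_nonneg (by linarith : (0:ℝ) ≤ z - 29/100) (by linarith : (0:ℝ) ≤ 11/20 - z)), mul_nonneg hc0.le (by linarith : (0:ℝ) ≤ z)]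
      calc c * (1 - z) ^ (c - 1) ≤ c / (1 - z) := hnumle
        _ ≤ 11 * (c * z) := hcz
        _ ≤ 11 * (1 - (1 - z) ^ c) := by nlinarith
    rw [div_le_iff₀ hden]
    linarith
  have hxy := (convex_Icc (0.29 : ℝ) 0.55).norm_image_sub_le_of_norm_hasDerivWithin_le
    key bound hy hx
  simpa [Real.norm_eq_abs] using hxy
end

section
/- Let A be a positive integer, γ ∈ (0,1), γ_A = 1 - (1-γ)^A, and suppose γ_A ∈ [0.29, 0.55] and ĝ ∈ [0.29, 0.55] with |ĝ - γ_A| ≤ ε/22 for some ε ∈ [0,1]. Then with h(x) = 1 - (1-x)^{1/A}, the estimate h(ĝ) satisfies |h(ĝ)/γ - 1| ≤ ε. -/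
lemma rpow_diff_le_aux (A : ℕ) (hA : 0 < A) {a b : ℝ} (ha : (0.45:ℝ) ≤ a)
    (hab : a ≤ b) (hb1 : b ≤ 1) :
    b ^ (1 / (A : ℝ)) - a ^ (1 / (A : ℝ)) ≤ (b - a) / (0.45 * A) := by
  have hA' : (0:ℝ) < A := Nat.cast_pos.mpr hA
  have hp0 : (0:ℝ) ≤ 1 / A := by positivity
  have hp1 : (1:ℝ) / A ≤ 1 := by
    rw [div_le_one hA']; exact_mod_cast hA
  have ha0 : (0:ℝ) < a := by linarith
  set s : ℝ := (b - a) / a with hs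
  have hs0 : 0 ≤ s := div_nonneg (by linarith) ha0.le
  have hb_eq : b = a * (1 + s) := by rw [hs, mul_add, mul_one, mul_div_assoc', mul_comm a (b - a), mul_div_assoc, div_self ha0.ne', mul_one]; ring
  have h1 : b ^ (1/(A:ℝ)) = a ^ (1/(A:ℝ)) * (1 + s) ^ (1/(A:ℝ)) := by
    rw [hb_eq, Real.mul_rpow ha0.le (by linarith)]
  have h2 : (1 + s) ^ (1/(A:ℝ)) ≤ 1 + (1/(A:ℝ)) * s :=
    rpow_one_add_le_one_add_mul_self (by linarith) hp0 hp1
  have h3 : a ^ (1/(A:ℝ)) ≤ 1 := Real.rpow_le_one ha0.le (by linarith) hp0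
  have h4 : 0 ≤ a ^ (1/(A:ℝ)) := (Real.rpow_pos_of_pos ha0 _).le
  have h5 : b ^ (1/(A:ℝ)) ≤ a ^ (1/(A:ℝ)) * (1 + (1/(A:ℝ)) * s) := by
    rw [h1]; exact mul_le_mul_of_nonneg_left h2 h4
  have h6 : a ^ (1/(A:ℝ)) * (1 + (1/(A:ℝ)) * s) ≤ a ^ (1/(A:ℝ)) + (1/(A:ℝ)) * s := by
    nlinarith [mul_nonneg hp0 hs0]
  have h7 : s ≤ (b - a) / 0.45 := by
    apply div_le_div_of_nonneg_left (by linarith) (by norm_num) ha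
  have h8 : (1/(A:ℝ)) * s ≤ (b - a) / (0.45 * A) := by
    rw [one_div_mul_eq_div]
    calc s / (A:ℝ) ≤ ((b-a)/0.45) / (A:ℝ) := by
          gcongr
      _ = (b - a) / (0.45 * A) := by rw [div_div]
  linarith

lemma rpow_absdiff_le (A : ℕ) (hA : 0 < A) {a b : ℝ} (ha : (0.45:ℝ) ≤ a) (hb : (0.45:ℝ) ≤ b)
    (ha1 : a ≤ 1) (hb1 : b ≤ 1) :
    |b ^ (1 / (A : ℝ)) - a ^ (1 / (A : ℝ))| ≤ |b - a| / (0.45 * A) := by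
  have hA' : (0:ℝ) < A := Nat.cast_pos.mpr hA
  rcases le_total a b with h | h
  · rw [abs_of_nonneg (sub_nonneg.mpr (Real.rpow_le_rpow (by linarith) h (by positivity))),
      abs_of_nonneg (sub_nonneg.mpr h)]
    exact rpow_diff_le_aux A hA ha h hb1
  · rw [abs_sub_comm, abs_sub_comm b a,
      abs_of_nonneg (sub_nonneg.mpr (Real.rpow_le_rpow (by linarith) h (by positivity))),
      abs_of_nonneg (sub_nonneg.mpr h)]
    exact rpow_diff_le_aux A hA hb h ha1

theorem stmt_10 (A : ℕ) (hA : 0 < A) (γ : ℝ) (hγ : γ ∈ Set.Ioo (0 : ℝ) 1)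
    (ghat ε : ℝ) (hε0 : 0 ≤ ε) (hε1 : ε ≤ 1)
    (hγA : 1 - (1 - γ) ^ A ∈ Set.Icc (0.29 : ℝ) 0.55)
    (hghatmem : ghat ∈ Set.Icc (0.29 : ℝ) 0.55)
    (hest : |ghat - (1 - (1 - γ) ^ A)| ≤ ε / 22) :
    |(1 - (1 - ghat) ^ (1 / (A : ℝ))) / γ - 1| ≤ ε := by
  obtain ⟨hγ0, hγ1⟩ := hγ
  have hA' : (0:ℝ) < A := Nat.cast_pos.mpr hA
  have hu0 : (0:ℝ) < 1 - γ := by linarith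
  have huA1 : (0.45:ℝ) ≤ (1 - γ) ^ A := by have := hγA.2; linarith
  have huA2 : (1 - γ) ^ A ≤ 0.71 := by have := hγA.1; linarith
  have huA3 : (1 - γ) ^ A ≤ 1 := by linarith
  have hupow : ((1 - γ) ^ A : ℝ) ^ (1 / (A:ℝ)) = 1 - γ := by
    rw [← Real.rpow_natCast (1 - γ) A, ← Real.rpow_mul hu0.le,
      mul_one_div, div_self (ne_of_gt hA'), Real.rpow_one]
  have hbern : 1 - (A:ℝ) * γ ≤ (1 - γ) ^ A := by
    have h := one_add_mul_le_pow (a := -γ) (by linarith) A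
    have he : (1 + -γ : ℝ) ^ A = (1 - γ) ^ A := by ring_nf
    rw [he] at h
    linarith
  have hγlow : 0.29 / (A:ℝ) ≤ γ := by
    rw [div_le_iff₀ hA']
    nlinarith [hγA.1]
  have hy1 : (0.45:ℝ) ≤ 1 - ghat := by have := hghatmem.2; linarith
  have hy2 : 1 - ghat ≤ 1 := by have := hghatmem.1; linarith
  have hdiff : |(1 - ghat) ^ (1/(A:ℝ)) - ((1-γ)^A) ^ (1/(A:ℝ))|
      ≤ (ε/22) / (0.45 * A) := by
    refine le_trans (rpow_absdiff_le A hA huA1 hy1 huA3 hy2) ?_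
    apply div_le_div_of_nonneg_right ?_ (by positivity)
    · calc |(1 - ghat) - (1-γ)^A| = |ghat - (1 - (1 - γ) ^ A)| := by
            rw [abs_sub_comm]; ring_nf
        _ ≤ ε / 22 := hest
  rw [hupow] at hdiff
  have key : |(1 - (1 - ghat) ^ (1 / (A : ℝ))) - γ| ≤ (ε/22) / (0.45 * A) := by
    calc |(1 - (1 - ghat) ^ (1 / (A : ℝ))) - γ|
        = |(1 - ghat) ^ (1/(A:ℝ)) - (1 - γ)| := by rw [abs_sub_comm]; ring_nf
      _ ≤ (ε/22) / (0.45 * A) := hdiff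
  have heq : (1 - (1 - ghat) ^ (1 / (A : ℝ))) / γ - 1
      = ((1 - (1 - ghat) ^ (1 / (A : ℝ))) - γ) / γ := by
    field_simp
  rw [heq, abs_div, abs_of_pos hγ0, div_le_iff₀ hγ0]
  have hfin : (ε/22) / (0.45 * A) ≤ ε * γ := by
    rw [div_le_iff₀ (by positivity : (0:ℝ) < 0.45 * A)]
    have h1 : 0.29 ≤ γ * A := by
      rw [div_le_iff₀ hA'] at hγlow; linarith
    nlinarith [mul_le_mul_of_nonneg_left h1 hε0]
  linarith [key]
end

section
/- For every γ ∈ (0, 1/2), let k* be the least k ≥ 0 with 1 - (1-γ)^{2^k} > 0.30; then k* ≤ ⌊log₂(1/γ)⌋ and 1 - (1-γ)^{2^{k*}} < 0.54. -/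
theorem stmt_17 (γ : ℝ) (hγ0 : 0 < γ) (hγ1 : γ < 1/2) :
    ∃ k : ℕ,
      (0.30 < 1 - (1 - γ) ^ (2 ^ k) ∧ ∀ j < k, 1 - (1 - γ) ^ (2 ^ j) ≤ 0.30) ∧
      (k : ℤ) ≤ ⌊Real.logb 2 (1/γ)⌋ ∧
      1 - (1 - γ) ^ (2 ^ k) < 0.54 := by
  classical
  have hx0 : (0:ℝ) < 1 - γ := by linarith
  set L : ℝ := Real.logb 2 (1/γ) with hLdef
  have hγinv : (2:ℝ) < 1/γ := by rw [lt_div_iff₀ hγ0]; linarith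
  have hγinvpos : (0:ℝ) < 1/γ := by positivity
  have hL1 : 1 < L := by
    have h2 : Real.logb 2 2 < Real.logb 2 (1/γ) :=
      Real.logb_lt_logb (by norm_num) (by norm_num) hγinv
    have h3 : Real.logb 2 2 = 1 := by simp
    rw [hLdef]; linarith
  set K := ⌊L⌋₊ with hKdef
  -- 2^K * γ ≥ 1/2
  have hKL : L - 1 < (K : ℝ) := by
    have := Nat.lt_floor_add_one L
    push_cast at this ⊢
    linarith
  have hpow : (1/γ)/2 ≤ (2:ℝ) ^ K := by
    have h1 : (2:ℝ) ^ (L - 1) ≤ (2:ℝ) ^ (K : ℝ) := by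
      apply Real.rpow_le_rpow_of_exponent_le (by norm_num) hKL.le
    have h2 : (2:ℝ) ^ (L - 1) = (1/γ)/2 := by
      rw [Real.rpow_sub (by norm_num), Real.rpow_logb (by positivity) (by norm_num) hγinvpos,
        Real.rpow_one]
    rw [← h2]
    calc (2:ℝ) ^ (L-1) ≤ (2:ℝ) ^ (K:ℝ) := h1
      _ = (2:ℝ) ^ K := by rw [Real.rpow_natCast]
  have hhalf : (1:ℝ)/2 ≤ γ * 2 ^ K := by
    have h := mul_le_mul_of_nonneg_left hpow hγ0.le
    have heq : γ * (1/γ/2) = 1/2 := by field_simp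
    linarith
  -- (1-γ)^(2^K) < 0.7
  have hexpK : (1 - γ) ^ (2 ^ K) < 0.7 := by
    have hle : (1 - γ) ^ (2 ^ K) ≤ Real.exp (-γ) ^ (2 ^ K) := by
      apply pow_le_pow_left₀ hx0.le
      linarith [Real.add_one_le_exp (-γ)]
    have heq : Real.exp (-γ) ^ (2 ^ K) = Real.exp (-(γ * 2 ^ K)) := by
      rw [← Real.exp_nat_mul]; congr 1; push_cast; ring
    have h2K : ((2:ℕ) ^ K : ℝ) = (2:ℝ) ^ K := by push_cast; ring
    have hmono : Real.exp (-(γ * 2 ^ K)) ≤ Real.exp (-(1/2)) := by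
      apply Real.exp_le_exp.mpr
      have : (1:ℝ)/2 ≤ γ * ((2:ℕ) ^ K : ℝ) := by rw [h2K]; exact hhalf
      linarith
    have hexp : Real.exp (-(1/2 : ℝ)) < 0.7 := by
      have h1 : (1:ℝ) + 1/2 ≤ Real.exp (1/2) := by
        have := Real.add_one_le_exp (1/2 : ℝ); linarith
      have h2 : Real.exp (-(1/2 : ℝ)) = 1 / Real.exp (1/2) := by
        rw [Real.exp_neg]; ring
      rw [h2, div_lt_iff₀ (Real.exp_pos _)]
      nlinarith
    calc (1 - γ) ^ (2 ^ K) ≤ Real.exp (-γ) ^ (2 ^ K) := hle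
      _ = Real.exp (-(γ * 2 ^ K)) := heq
      _ ≤ Real.exp (-(1/2)) := by
          have : γ * ((2:ℕ) ^ K : ℝ) = γ * (2:ℝ) ^ K := by rw [h2K]
          exact hmono
      _ < 0.7 := hexp
  have hPK : (0.30 : ℝ) < 1 - (1 - γ) ^ (2 ^ K) := by norm_num at hexpK ⊢; linarith
  have hex : ∃ k : ℕ, (0.30 : ℝ) < 1 - (1 - γ) ^ (2 ^ k) := ⟨K, hPK⟩
  set k := Nat.find hex with hkdef
  have hk : (0.30 : ℝ) < 1 - (1 - γ) ^ (2 ^ k) := Nat.find_spec hex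
  have hmin : ∀ j < k, 1 - (1 - γ) ^ (2 ^ j) ≤ 0.30 := by
    intro j hj
    have := Nat.find_min hex hj
    push_neg at this
    exact this
  have hkK : k ≤ K := Nat.find_le hPK
  clear hkdef
  clear_value k
  refine ⟨k, ⟨hk, hmin⟩, ?_, ?_⟩
  · have hcast : ((K : ℤ)) = ⌊L⌋ := Int.natCast_floor_eq_floor (by linarith)
    calc (k : ℤ) ≤ (K : ℤ) := by exact_mod_cast hkK
      _ = ⌊L⌋ := hcast
  · rcases Nat.eq_zero_or_pos k with h0 | hpos
    · rw [h0]; norm_num; linarith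
    · obtain ⟨m, rfl⟩ := Nat.exists_eq_succ_of_ne_zero hpos.ne'
      have hm : 1 - (1 - γ) ^ (2 ^ m) ≤ 0.30 := hmin m (Nat.lt_succ_self m)
      have hm' : (0.7 : ℝ) ≤ (1 - γ) ^ (2 ^ m) := by norm_num at hm ⊢; linarith
      have hsq : (1 - γ) ^ (2 ^ (m + 1)) = ((1 - γ) ^ (2 ^ m)) ^ 2 := by
        rw [← pow_mul, ← pow_succ]
      rw [hsq]
      nlinarith
end
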